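/- Let w ∈ H^{3/2+δ}(ℝ^n), δ > 0, and let Ψ be a radial mollifier (Ψ ∈ C_0^∞ radial, 0 ≤ Ψ ≤ 1, ∫Ψ = 1), Ψ_h(x) = h^{-n}Ψ(x/h), w_h = w * Ψ_h. Then ‖w_h - w‖_{H^{1/2+δ}(ℝ^n)} = o(h) as h → 0. -/

import Mathlib

open MeasureTheory Filter
open scoped Topology FourierTransform

set_option maxHeartbeats 1000000

namespace MollifierAux

open Complex
open scoped RealInnerProductSpace Convolution

variable {n : ℕ}

local notation "V" => EuclideanSpace ℝ (Fin n)

theorem fourier_conv (φ g : V → ℂ) (hφ : Integrable φ) (hg : Integrable g) (ξ : V) :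
    𝓕 (fun x => ∫ y, φ y * g (x - y)) ξ = 𝓕 φ ξ * 𝓕 g ξ := by
  have h1 : Integrable (fun p : V × V => φ p.2 * g (p.1 - p.2)) (volume.prod volume) :=
    hφ.convolution_integrand (ContinuousLinearMap.mul ℝ ℂ) hg
  have hcont : Continuous fun p : V × V => ((𝐞 (-⟪p.1, ξ⟫) : Circle) : ℂ) := by
    exact continuous_subtype_val.comp (Real.continuous_fourierChar.comp
      (continuous_fst.inner continuous_const).neg)
  have hint : Integrable (fun p : V × V =>
      ((𝐞 (-⟪p.1, ξ⟫) : Circle) : ℂ) * (φ p.2 * g (p.1 - p.2))) (volume.prod volume) := by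
    refine h1.bdd_mul hcont.aestronglyMeasurable (c := 1) (Eventually.of_forall fun p => ?_)
    exact (Circle.norm_coe _).le
  calc 𝓕 (fun x => ∫ y, φ y * g (x - y)) ξ
      = ∫ x, ((𝐞 (-⟪x, ξ⟫) : Circle) : ℂ) * ∫ y, φ y * g (x - y) := by
        rw [Real.fourier_eq]
        simp only [Circle.smul_def, smul_eq_mul]
    _ = ∫ x, ∫ y, ((𝐞 (-⟪x, ξ⟫) : Circle) : ℂ) * (φ y * g (x - y)) := by
        simp_rw [integral_const_mul]
    _ = ∫ y, ∫ x, ((𝐞 (-⟪x, ξ⟫) : Circle) : ℂ) * (φ y * g (x - y)) :=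
        integral_integral_swap hint
    _ = ∫ y, (((𝐞 (-⟪y, ξ⟫) : Circle) : ℂ) * φ y) * 𝓕 g ξ := by
        refine integral_congr_ae (Eventually.of_forall fun y => ?_)
        dsimp only
        rw [← integral_add_right_eq_self
          (fun x => ((𝐞 (-⟪x, ξ⟫) : Circle) : ℂ) * (φ y * g (x - y))) y]
        have hsplit : ∀ x : V, ((𝐞 (-⟪x + y, ξ⟫) : Circle) : ℂ)
            = ((𝐞 (-⟪x, ξ⟫) : Circle) : ℂ) * ((𝐞 (-⟪y, ξ⟫) : Circle) : ℂ) := by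
          intro x
          rw [inner_add_left, neg_add, AddChar.map_add_eq_mul]
          norm_cast
        simp_rw [add_sub_cancel_right, hsplit]
        rw [Real.fourier_eq]
        simp only [Circle.smul_def, smul_eq_mul]
        rw [← integral_const_mul]
        congr 1 with x
        ring
    _ = (∫ y, ((𝐞 (-⟪y, ξ⟫) : Circle) : ℂ) * φ y) * 𝓕 g ξ := integral_mul_const _ _
    _ = 𝓕 φ ξ * 𝓕 g ξ := by
        congr 1

theorem fourier_sub (f g : V → ℂ) (hf : Integrable f) (hg : Integrable g) (ξ : V) :
    𝓕 (fun x => f x - g x) ξ = 𝓕 f ξ - 𝓕 g ξ := by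
  simp only [Real.fourier_eq, smul_sub]
  exact integral_sub ((Real.fourierIntegral_convergent_iff ξ).2 hf)
    ((Real.fourierIntegral_convergent_iff ξ).2 hg)

theorem fourier_scale (Ψ : V → ℝ) {h : ℝ} (hh : 0 < h) (ξ : V) :
    𝓕 (fun y : V => (((h ^ n)⁻¹ * Ψ (h⁻¹ • y) : ℝ) : ℂ)) ξ
      = 𝓕 (fun y : V => (Ψ y : ℂ)) (h • ξ) := by
  have hne : h ≠ 0 := hh.ne'
  set F : V → ℂ := fun y => ((𝐞 (-⟪h • y, ξ⟫) : Circle) : ℂ) * (((h ^ n)⁻¹ * Ψ y : ℝ) : ℂ)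
    with hF
  have step1 : 𝓕 (fun y : V => (((h ^ n)⁻¹ * Ψ (h⁻¹ • y) : ℝ) : ℂ)) ξ
      = ∫ x, F (h⁻¹ • x) := by
    rw [Real.fourier_eq]
    refine integral_congr_ae (Eventually.of_forall fun x => ?_)
    simp only [hF, smul_inv_smul₀ hne, Circle.smul_def, smul_eq_mul]
  rw [step1, MeasureTheory.Measure.integral_comp_inv_smul volume F h]
  have hfr : Module.finrank ℝ (EuclideanSpace ℝ (Fin n)) = n := finrank_euclideanSpace_fin
  rw [hfr, abs_of_pos (pow_pos hh n)]
  have step2 : ∫ y, F y = ((h ^ n : ℝ) : ℂ)⁻¹ * 𝓕 (fun y : V => (Ψ y : ℂ)) (h • ξ) := by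
    rw [Real.fourier_eq, ← integral_const_mul]
    refine integral_congr_ae (Eventually.of_forall fun y => ?_)
    have hinner : ⟪h • y, ξ⟫ = ⟪y, h • ξ⟫ := by
      rw [real_inner_smul_left, real_inner_smul_right]
    simp only [hF, hinner, Circle.smul_def, smul_eq_mul]
    push_cast
    ring
  rw [step2, Complex.real_smul, ← mul_assoc,
    mul_inv_cancel₀ (Complex.ofReal_ne_zero.2 (by positivity)), one_mul]

theorem fourier_at_zero (Ψ : V → ℝ) (h1 : ∫ x, Ψ x = 1) :
    𝓕 (fun x : V => (Ψ x : ℂ)) 0 = 1 := by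
  rw [Real.fourier_eq]
  simp only [inner_zero_right, neg_zero, AddChar.map_zero_eq_one, one_smul]
  have key : ∫ v : V, ((Ψ v : ℝ) : ℂ) = ((∫ v, Ψ v : ℝ) : ℂ) := integral_ofReal
  rw [key, h1, Complex.ofReal_one]

theorem fourier_deriv_zero (Ψ : V → ℝ) (hcont : Continuous Ψ)
    (hsupp : HasCompactSupport Ψ)
    (hrad : ∀ x y : V, ‖x‖ = ‖y‖ → Ψ x = Ψ y) :
    HasFDerivAt (𝓕 (fun x : V => (Ψ x : ℂ)))
      (0 : EuclideanSpace ℝ (Fin n) →L[ℝ] ℂ) 0 := by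
  set Ψc : V → ℂ := fun x => (Ψ x : ℂ) with hΨc
  have hΨc_cont : Continuous Ψc := Complex.continuous_ofReal.comp hcont
  have hΨc_supp : HasCompactSupport Ψc := hsupp.comp_left (g := Complex.ofReal) Complex.ofReal_zero
  have hint : Integrable Ψc := hΨc_cont.integrable_of_hasCompactSupport hΨc_supp
  have hint' : Integrable (fun v : V => ‖v‖ * ‖Ψc v‖) := by
    refine Continuous.integrable_of_hasCompactSupport
      (continuous_norm.mul hΨc_cont.norm) ?_
    exact (hΨc_supp.norm).mul_left
  have hD := Real.hasFDerivAt_fourier hint hint' 0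
  set G := VectorFourier.fourierSMulRight (innerSL ℝ) Ψc with hG
  have hodd : ∀ v : V, G (-v) = -G v := by
    intro v
    ext u
    have hval : Ψ (-v) = Ψ v := hrad (-v) v (by simp)
    simp only [hG, VectorFourier.fourierSMulRight_apply, ContinuousLinearMap.neg_apply,
      map_neg, ContinuousLinearMap.neg_apply, hΨc, hval, neg_smul, smul_neg]
  have hzero : 𝓕 G 0 = 0 := by
    have heq : 𝓕 G 0 = ∫ v, G v := by
      rw [Real.fourier_eq]
      simp
    rw [heq]
    have h1 : ∫ v, G v = -∫ v, G v := by
      conv_lhs => rw [← integral_neg_eq_self G volume]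
      simp_rw [hodd]
      exact integral_neg G
    have h2 : (2 : ℝ) • (∫ v, G v) = 0 := by
      rw [two_smul]
      nth_rewrite 2 [h1]
      exact add_neg_cancel _
    rcases smul_eq_zero.mp h2 with h | h
    · norm_num at h
    · exact h
  rw [← hzero]
  exact hD

theorem fourier_norm_le (Ψ : V → ℝ) (hnn : ∀ x, 0 ≤ Ψ x) (h1 : ∫ x, Ψ x = 1) (η : V) :
    ‖𝓕 (fun x : V => (Ψ x : ℂ)) η‖ ≤ 1 := by
  refine le_trans (VectorFourier.norm_fourierIntegral_le_integral_norm _ _ _ _ _) ?_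
  have key : ∀ x : V, ‖((Ψ x : ℝ) : ℂ)‖ = Ψ x := fun x => by
    rw [Complex.norm_real]
    exact abs_of_nonneg (hnn x)
  rw [show (∫ x : V, ‖((Ψ x : ℝ) : ℂ)‖) = ∫ x : V, Ψ x from
    integral_congr_ae (Eventually.of_forall fun x => key x), h1]

theorem fourier_global_bound (Ψ : V → ℝ) (hcont : Continuous Ψ)
    (hsupp : HasCompactSupport Ψ) (hnn : ∀ x, 0 ≤ Ψ x)
    (hrad : ∀ x y : V, ‖x‖ = ‖y‖ → Ψ x = Ψ y) (h1 : ∫ x, Ψ x = 1) :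
    ∃ M : ℝ, 1 ≤ M ∧ ∀ η : V, ‖𝓕 (fun x : V => (Ψ x : ℂ)) η - 1‖ ≤ M * ‖η‖ := by
  have hoo : (fun η : V => 𝓕 (fun x : V => (Ψ x : ℂ)) η - 1)
      =o[𝓝 (0 : EuclideanSpace ℝ (Fin n))] (fun η => η) := by
    have := (fourier_deriv_zero Ψ hcont hsupp hrad).isLittleO
    simpa [fourier_at_zero Ψ h1] using this
  have hev := hoo.def one_pos
  rw [Metric.eventually_nhds_iff] at hev
  obtain ⟨ε, hε, hball⟩ := hev
  refine ⟨max 1 (4 / ε), le_max_left _ _, fun η => ?_⟩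
  rcases lt_or_ge ‖η‖ (ε / 2) with hlt | hge
  · have hb := hball (y := η) (by rw [dist_zero_right]; linarith)
    simp only [one_mul] at hb
    calc ‖𝓕 (fun x : V => (Ψ x : ℂ)) η - 1‖ ≤ ‖η‖ := hb
    _ ≤ max 1 (4 / ε) * ‖η‖ := by
        nth_rewrite 1 [← one_mul ‖η‖]
        exact mul_le_mul_of_nonneg_right (le_max_left _ _) (norm_nonneg _)
  · have hb : ‖𝓕 (fun x : V => (Ψ x : ℂ)) η - 1‖ ≤ 2 := by
      calc ‖𝓕 (fun x : V => (Ψ x : ℂ)) η - 1‖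
          ≤ ‖𝓕 (fun x : V => (Ψ x : ℂ)) η‖ + ‖(1 : ℂ)‖ := norm_sub_le _ _
      _ ≤ 1 + 1 := by
          have := fourier_norm_le Ψ hnn h1 η
          simp only [norm_one]
          linarith
      _ = 2 := by norm_num
    calc ‖𝓕 (fun x : V => (Ψ x : ℂ)) η - 1‖ ≤ 2 := hb
    _ ≤ 4 / ε * ‖η‖ := by
        rw [div_mul_eq_mul_div, le_div_iff₀ hε]
        nlinarith
    _ ≤ max 1 (4 / ε) * ‖η‖ := mul_le_mul_of_nonneg_right (le_max_right _ _) (norm_nonneg _)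

end MollifierAux


/-- Let `w ∈ H^{3/2+δ}(ℝ^n)`, `δ > 0` (formulated via the Fourier transform), and let `Ψ`
be a radial mollifier, `Ψ_h(x) = h^{-n} Ψ(x/h)`, `w_h = w * Ψ_h`.  Then
`‖w_h - w‖_{H^{1/2+δ}(ℝ^n)} = o(h)` as `h → 0⁺`. -/
theorem mollification_radial_H_littleO {n : ℕ} (δ : ℝ) (hδ : 0 < δ)
    (Ψ : EuclideanSpace ℝ (Fin n) → ℝ)
    (hΨ_smooth : ContDiff ℝ (⊤ : ℕ∞) Ψ) (hΨ_supp : HasCompactSupport Ψ)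
    (hΨ_nonneg : ∀ x, 0 ≤ Ψ x) (hΨ_le_one : ∀ x, Ψ x ≤ 1)
    (hΨ_int : ∫ x, Ψ x = 1)
    (hΨ_radial : ∀ x y : EuclideanSpace ℝ (Fin n), ‖x‖ = ‖y‖ → Ψ x = Ψ y)
    (w : EuclideanSpace ℝ (Fin n) → ℂ)
    (hw_L1 : Integrable w) (hw_L2 : MemLp w 2 volume)
    (hw_H : Integrable (fun ξ : EuclideanSpace ℝ (Fin n) =>
      (1 + ‖ξ‖ ^ 2) ^ ((3 : ℝ) / 2 + δ) * ‖𝓕 w ξ‖ ^ 2)) :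
    Tendsto (fun h : ℝ =>
        Real.sqrt (∫ ξ, (1 + ‖ξ‖ ^ 2) ^ ((1 : ℝ) / 2 + δ) *
          ‖𝓕 (fun x => w x - ∫ y, ((h ^ n)⁻¹ * Ψ (h⁻¹ • y)) • w (x - y)) ξ‖ ^ 2) / h)
      (𝓝[>] 0) (𝓝 0) := by
  classical
  have hΨ_cont : Continuous Ψ := hΨ_smooth.continuous
  set Ψc : EuclideanSpace ℝ (Fin n) → ℂ := fun x => (Ψ x : ℂ) with hΨc_def
  have hΨc_cont : Continuous Ψc := Complex.continuous_ofReal.comp hΨ_cont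
  have hΨc_int : Integrable Ψc :=
    hΨc_cont.integrable_of_hasCompactSupport (hΨ_supp.comp_left Complex.ofReal_zero)
  obtain ⟨M, hM1, hMb⟩ := MollifierAux.fourier_global_bound Ψ hΨ_cont hΨ_supp hΨ_nonneg
    hΨ_radial hΨ_int
  have hMpos : 0 < M := lt_of_lt_of_le one_pos hM1
  set w' : EuclideanSpace ℝ (Fin n) → ℂ := 𝓕 w with hw'_def
  have hw'_cont : Continuous w' :=
    VectorFourier.fourierIntegral_continuous Real.continuous_fourierChar
      (by exact continuous_inner) hw_L1
  have h𝓕Ψc_cont : Continuous (𝓕 Ψc) :=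
    VectorFourier.fourierIntegral_continuous Real.continuous_fourierChar
      (by exact continuous_inner) hΨc_int
  set K : EuclideanSpace ℝ (Fin n) → ℝ :=
    fun ξ => (1 + ‖ξ‖ ^ 2) ^ ((1 : ℝ) / 2 + δ) with hK_def
  have hK_pos : ∀ ξ, 0 < K ξ := fun ξ => Real.rpow_pos_of_pos (by positivity) _
  have hK_cont : Continuous K :=
    (continuous_const.add ((continuous_norm).pow 2)).rpow_const
      (fun ξ => Or.inl (ne_of_gt (add_pos_of_pos_of_nonneg one_pos (sq_nonneg _))))
  set F : ℝ → EuclideanSpace ℝ (Fin n) → ℝ :=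
    fun h ξ => K ξ * (‖(1 : ℂ) - 𝓕 Ψc (h • ξ)‖ / h) ^ 2 * ‖w' ξ‖ ^ 2 with hF_def
  have hFnn : ∀ (h : ℝ) ξ, 0 ≤ F h ξ := fun h ξ =>
    mul_nonneg (mul_nonneg (hK_pos ξ).le (sq_nonneg _)) (sq_nonneg _)
  -- the key identity for the Fourier transform of the difference
  have hidentity : ∀ h : ℝ, 0 < h → ∀ ξ,
      𝓕 (fun x => w x - ∫ y, ((h ^ n)⁻¹ * Ψ (h⁻¹ • y)) • w (x - y)) ξ
        = (1 - 𝓕 Ψc (h • ξ)) * w' ξ := by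
    intro h hh ξ
    set φc : EuclideanSpace ℝ (Fin n) → ℂ :=
      fun y => (((h ^ n)⁻¹ * Ψ (h⁻¹ • y) : ℝ) : ℂ) with hφc_def
    have hφ_int : Integrable φc := by
      have h2 : Integrable (fun y : EuclideanSpace ℝ (Fin n) => Ψ (h⁻¹ • y)) :=
        (hΨ_cont.integrable_of_hasCompactSupport hΨ_supp).comp_smul (inv_ne_zero hh.ne')
      exact (h2.const_mul _).ofReal
    have hrw : (fun x => w x - ∫ y, ((h ^ n)⁻¹ * Ψ (h⁻¹ • y)) • w (x - y))
        = fun x => w x - ∫ y, φc y * w (x - y) := by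
      funext x
      simp only [Complex.real_smul, hφc_def]
    have hconv_eq : (fun x => ∫ y, φc y * w (x - y))
        = convolution φc w (ContinuousLinearMap.mul ℝ ℂ) volume := by
      funext x
      rw [convolution_def]
      rfl
    have hconv_int : Integrable (fun x => ∫ y, φc y * w (x - y)) := by
      rw [hconv_eq]
      exact hφ_int.integrable_convolution (ContinuousLinearMap.mul ℝ ℂ) hw_L1
    rw [hrw, MollifierAux.fourier_sub w _ hw_L1 hconv_int ξ,
      MollifierAux.fourier_conv φc w hφ_int hw_L1 ξ,
      MollifierAux.fourier_scale Ψ hh ξ]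
    rw [← hΨc_def, ← hw'_def]
    ring
  -- rewriting the quantity of interest for positive h
  have hIeq : ∀ h : ℝ, 0 < h →
      Real.sqrt (∫ ξ, K ξ *
        ‖𝓕 (fun x => w x - ∫ y, ((h ^ n)⁻¹ * Ψ (h⁻¹ • y)) • w (x - y)) ξ‖ ^ 2) / h
        = Real.sqrt (∫ ξ, F h ξ) := by
    intro h hh
    have hint_eq : (∫ ξ, K ξ *
        ‖𝓕 (fun x => w x - ∫ y, ((h ^ n)⁻¹ * Ψ (h⁻¹ • y)) • w (x - y)) ξ‖ ^ 2)
        = (∫ ξ, F h ξ) * h ^ 2 := by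
      rw [← integral_mul_const]
      refine integral_congr_ae (Eventually.of_forall fun ξ => ?_)
      dsimp only
      rw [hidentity h hh ξ, norm_mul, mul_pow]
      simp only [hF_def]
      rw [div_pow]
      field_simp
    rw [hint_eq, Real.sqrt_mul (integral_nonneg fun ξ => hFnn h ξ) (h ^ 2),
      Real.sqrt_sq hh.le, mul_div_cancel_right₀ _ hh.ne']
  -- dominated convergence
  have hDCT : Tendsto (fun h : ℝ => ∫ ξ, F h ξ) (𝓝[>] (0 : ℝ)) (𝓝 0) := by
    have h0 : (𝓝 (0 : ℝ)) = 𝓝 (∫ _ξ : EuclideanSpace ℝ (Fin n), (0 : ℝ)) := by simp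
    rw [h0]
    refine tendsto_integral_filter_of_dominated_convergence
      (fun ξ => M ^ 2 * ((1 + ‖ξ‖ ^ 2) ^ ((3 : ℝ) / 2 + δ) * ‖w' ξ‖ ^ 2)) ?_ ?_ ?_ ?_
    · filter_upwards [self_mem_nhdsWithin] with h hh
      have : Continuous (F h) := by
        refine ((hK_cont.mul ?_).mul ((hw'_cont.norm).pow 2))
        refine ((Continuous.div_const ?_ h).pow 2)
        exact (continuous_const.sub (h𝓕Ψc_cont.comp (continuous_const_smul h))).norm
      exact this.aestronglyMeasurable
    · filter_upwards [self_mem_nhdsWithin] with h hh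
      rw [Set.mem_Ioi] at hh
      refine ae_of_all _ fun ξ => ?_
      rw [Real.norm_of_nonneg (hFnn h ξ)]
      have hstep : ‖(1 : ℂ) - 𝓕 Ψc (h • ξ)‖ / h ≤ M * ‖ξ‖ := by
        rw [div_le_iff₀ hh]
        calc ‖(1 : ℂ) - 𝓕 Ψc (h • ξ)‖ = ‖𝓕 Ψc (h • ξ) - 1‖ := norm_sub_rev _ _
        _ ≤ M * ‖h • ξ‖ := hMb _
        _ = M * ‖ξ‖ * h := by
            rw [norm_smul, Real.norm_of_nonneg hh.le]; ring
      have hKxi : K ξ * ‖ξ‖ ^ 2 ≤ (1 + ‖ξ‖ ^ 2) ^ ((3 : ℝ) / 2 + δ) := by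
        have hb : (0 : ℝ) < 1 + ‖ξ‖ ^ 2 := by positivity
        calc K ξ * ‖ξ‖ ^ 2 ≤ K ξ * (1 + ‖ξ‖ ^ 2) := by
              refine mul_le_mul_of_nonneg_left (by linarith) (hK_pos ξ).le
        _ = (1 + ‖ξ‖ ^ 2) ^ ((1 : ℝ) / 2 + δ) * (1 + ‖ξ‖ ^ 2) ^ (1 : ℝ) := by
              rw [Real.rpow_one, hK_def]
        _ = (1 + ‖ξ‖ ^ 2) ^ ((1 : ℝ) / 2 + δ + 1) := (Real.rpow_add hb _ _).symm
        _ = (1 + ‖ξ‖ ^ 2) ^ ((3 : ℝ) / 2 + δ) := by congr 1; ring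
      have h2 : (‖(1 : ℂ) - 𝓕 Ψc (h • ξ)‖ / h) ^ 2 ≤ (M * ‖ξ‖) ^ 2 := by
        have hd : 0 ≤ ‖(1 : ℂ) - 𝓕 Ψc (h • ξ)‖ / h := by positivity
        exact pow_le_pow_left₀ hd hstep 2
      calc F h ξ ≤ K ξ * (M * ‖ξ‖) ^ 2 * ‖w' ξ‖ ^ 2 := by
            simp only [hF_def]
            refine mul_le_mul_of_nonneg_right
              (mul_le_mul_of_nonneg_left h2 (hK_pos ξ).le) (sq_nonneg _)
      _ = M ^ 2 * (K ξ * ‖ξ‖ ^ 2 * ‖w' ξ‖ ^ 2) := by ring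
      _ ≤ M ^ 2 * ((1 + ‖ξ‖ ^ 2) ^ ((3 : ℝ) / 2 + δ) * ‖w' ξ‖ ^ 2) := by
            refine mul_le_mul_of_nonneg_left ?_ (sq_nonneg _)
            exact mul_le_mul_of_nonneg_right hKxi (sq_nonneg _)
    · exact hw_H.const_mul _
    · refine ae_of_all _ fun ξ => ?_
      have hoo : (fun η : EuclideanSpace ℝ (Fin n) => 𝓕 Ψc η - 1)
          =o[𝓝 (0 : EuclideanSpace ℝ (Fin n))] (fun η => η) := by
        have := (MollifierAux.fourier_deriv_zero Ψ hΨ_cont hΨ_supp hΨ_radial).isLittleO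
        simpa [MollifierAux.fourier_at_zero Ψ hΨ_int] using this
      have t1 : Tendsto (fun h : ℝ => h • ξ) (𝓝[>] (0 : ℝ))
          (𝓝 (0 : EuclideanSpace ℝ (Fin n))) := by
        have h2 : Tendsto (fun h : ℝ => h • ξ) (𝓝 0) (𝓝 ((0 : ℝ) • ξ)) :=
          ((continuous_id.smul continuous_const).tendsto 0)
        simpa using h2.mono_left nhdsWithin_le_nhds
      have o2 := hoo.comp_tendsto t1
      have o3 : (fun h : ℝ => h • ξ) =O[𝓝[>] (0 : ℝ)] (fun h => h) := by
        refine Asymptotics.IsBigO.of_bound ‖ξ‖ ?_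
        filter_upwards with h
        rw [norm_smul]
        exact le_of_eq (mul_comm _ _)
      have o4 := (o2.trans_isBigO o3).norm_left
      have t2 : Tendsto (fun h : ℝ => ‖𝓕 Ψc (h • ξ) - 1‖ / h) (𝓝[>] (0 : ℝ)) (𝓝 0) :=
        o4.tendsto_div_nhds_zero
      have t3 : Tendsto (fun h : ℝ => K ξ * (‖(1 : ℂ) - 𝓕 Ψc (h • ξ)‖ / h) ^ 2 * ‖w' ξ‖ ^ 2)
          (𝓝[>] (0 : ℝ)) (𝓝 (K ξ * (0 : ℝ) ^ 2 * ‖w' ξ‖ ^ 2)) := by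
        refine Tendsto.mul_const _ (Tendsto.const_mul _ ?_)
        refine Tendsto.congr (fun h => ?_) (t2.pow 2)
        rw [norm_sub_rev]
      simpa using t3
  have hmain : Tendsto (fun h : ℝ => Real.sqrt (∫ ξ, F h ξ)) (𝓝[>] (0 : ℝ)) (𝓝 0) := by
    have := (Real.continuous_sqrt.tendsto 0).comp hDCT
    simpa [Real.sqrt_zero, Function.comp_def] using this
  refine Tendsto.congr' ?_ hmain
  filter_upwards [self_mem_nhdsWithin] with h hh
  rw [Set.mem_Ioi] at hh
  exact (hIeq h hh).symm
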